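/- Let N ≥ 2 and let z_1 > z_2 > … > z_N be real numbers that are precisely the zeros of the N-th physicists' Hermite polynomial H_N, and set z := (z_1,…,z_N). Then for every c > 0 the function φ(t) := √(2t + c²) · z on [0,∞) takes values in the interior of C_N^A, satisfies φ(0) = c·z, and solves the ODE of type A_{N−1}: φ_i'(t) = ∑_{j≠i} 1/(φ_i(t) − φ_j(t)) for all i and all t ≥ 0. -/

import Mathlib

/-!
At every zero `w_i` of a polynomial `P` with simple zeros `w_1, …, w_N`, one has
`P''(w_i) = 2 P'(w_i) ∑_{j ≠ i} 1/(w_i - w_j)`. For the probabilists' Hermite polynomial the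
Hermite equation `He_N'' = x He_N' - N He_N` turns this into the Stieltjes relations
`2 ∑_{j ≠ i} 1/(w_i - w_j) = w_i`, and since `H_N(x) = √2^N He_N(√2 x)` the zeros `z` of `H_N`
satisfy `∑_{j ≠ i} 1/(z_i - z_j) = z_i`. Such a `z` is a self-similar profile of the ODE: the
right-hand side at `s z` is `s⁻¹ z`, which is the velocity of `s(t) z` when `s s' = 1`, i.e.
for `s(t) = √(2t + c²)`.
-/

noncomputable section

open Polynomial Finset

/-- The interior of the closed Weyl chamber of type A. -/
def interiorA {N : ℕ} (x : Fin N → ℝ) : Prop := StrictAnti x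

/-- `φ` solves the ODE of type `A_{N-1}` on `[0,∞)`. -/
def solvesA {N : ℕ} (φ : ℝ → Fin N → ℝ) : Prop :=
  ∀ t ∈ Set.Ici (0:ℝ), ∀ i : Fin N,
    HasDerivWithinAt (fun s => φ s i)
      (∑ j ∈ Finset.univ.erase i, 1 / (φ t i - φ t j)) (Set.Ici 0) t

/-- The `n`-th physicists' Hermite polynomial (as a function),
`H_n(x) = (-1)^n e^{x²} (d/dx)^n e^{-x²}`. -/
def physHermite (n : ℕ) (x : ℝ) : ℝ :=
  (-1 : ℝ)^n * Real.exp (x^2) * iteratedDeriv n (fun y => Real.exp (-y^2)) x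

namespace Polynomial

theorem derivative_hermite_succ (n : ℕ) :
    derivative (hermite (n + 1)) = (n + 1 : ℤ[X]) * hermite n := by
  induction n with
  | zero => simp
  | succ n ih =>
    rw [hermite_succ (n + 1), derivative_sub, derivative_mul, derivative_X, ih, derivative_mul,
      hermite_succ n]
    simp only [derivative_add, derivative_natCast, derivative_one]
    push_cast
    ring

theorem derivative_derivative_hermite (n : ℕ) :
    derivative (derivative (hermite n))
      = X * derivative (hermite n) - (n : ℤ[X]) * hermite n := by
  cases n with
  | zero => simp
  | succ n =>
    rw [derivative_hermite_succ, derivative_mul, hermite_succ n]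
    simp only [derivative_add, derivative_natCast, derivative_one]
    push_cast
    ring

theorem Monic.eq_nodal {K ι : Type*} [Field K] {p : K[X]} (hp : p.Monic)
    {s : Finset ι} {v : ι → K} (hvs : Set.InjOn v s) (hdeg : p.natDegree = #s)
    (hroot : ∀ i ∈ s, p.eval (v i) = 0) : p = Lagrange.nodal s v := by
  refine eq_of_degree_le_of_eval_index_eq _ hvs ?_ ?_ ?_ ?_
  · rw [degree_eq_natDegree hp.ne_zero, hdeg]
  · rw [degree_eq_natDegree hp.ne_zero, hdeg, Lagrange.degree_nodal]
  · rw [hp.leadingCoeff, Lagrange.nodal_monic.leadingCoeff]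
  · intro i hi
    rw [hroot i hi, Lagrange.eval_nodal_at_node hi]

end Polynomial

theorem sum_one_div_mul_sub_mul {K ι : Type*} [Field K] (s : Finset ι) (c : K) (z : ι → K)
    (i : ι) : ∑ j ∈ s, 1 / (c * z i - c * z j) = c⁻¹ * ∑ j ∈ s, 1 / (z i - z j) := by
  rw [mul_sum]
  refine sum_congr rfl fun j _ => ?_
  rw [← mul_sub, one_div, mul_inv, one_div]

namespace Lagrange

variable {K ι : Type*} [Field K] [DecidableEq ι] {s : Finset ι} {v : ι → K} {i : ι}

theorem eval_derivative_derivative_nodal (hvs : Set.InjOn v s) (hi : i ∈ s) :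
    eval (v i) (derivative (derivative (nodal s v)))
      = 2 * eval (v i) (derivative (nodal s v)) * ∑ j ∈ s.erase i, 1 / (v i - v j) := by
  have hsub : ∀ j ∈ s.erase i, v i - v j ≠ 0 := fun j hj =>
    sub_ne_zero.mpr fun h => (mem_erase.mp hj).1 (hvs hi (mem_of_mem_erase hj) h).symm
  have hterm : ∀ j ∈ s.erase i, eval (v i) (nodal ((s.erase i).erase j) v)
      = eval (v i) (nodal (s.erase i) v) * (1 / (v i - v j)) := fun j hj => by
    rw [nodal_eq_mul_nodal_erase hj, eval_mul]
    simp only [eval_sub, eval_X, eval_C]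
    field_simp [hsub j hj]
  rw [eval_nodal_derivative_eval_node_eq hi, nodal_eq_mul_nodal_erase hi]
  simp only [derivative_mul, derivative_add, derivative_sub, derivative_X, derivative_C, sub_zero,
    one_mul, zero_mul, eval_add, eval_mul, eval_sub, eval_X, eval_C, sub_self, add_zero]
  rw [derivative_nodal, eval_finsetSum, sum_congr rfl hterm, ← mul_sum]
  ring

theorem two_mul_sum_one_div_sub_eq_of_nodal_ode (hvs : Set.InjOn v s) (hi : i ∈ s) (α β : K)
    (hode : derivative (derivative (nodal s v))
      = C α * X * derivative (nodal s v) + C β * nodal s v) :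
    2 * ∑ j ∈ s.erase i, 1 / (v i - v j) = α * v i := by
  have hderiv : eval (v i) (derivative (nodal s v)) ≠ 0 := by
    rw [eval_nodal_derivative_eval_node_eq hi]
    exact eval_nodal_not_at_node fun j hj h =>
      (mem_erase.mp hj).1 (hvs (mem_of_mem_erase hj) hi h.symm)
  have h := congrArg (eval (v i)) hode
  rw [eval_derivative_derivative_nodal hvs hi] at h
  simp only [eval_add, eval_mul, eval_C, eval_X, eval_nodal_at_node hi, mul_zero, add_zero] at h
  apply mul_left_cancel₀ hderiv
  linear_combination h

end Lagrange

open Real in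
theorem iteratedDeriv_exp_neg_sq_eq_hermite (n : ℕ) (x : ℝ) :
    iteratedDeriv n (fun y => exp (-y ^ 2)) x
      = (-1) ^ n * √2 ^ n * aeval (√2 * x) (hermite n) * exp (-x ^ 2) := by
  have hgauss : (fun y : ℝ => exp (-y ^ 2)) = fun y => exp (-((√2 * y) ^ 2 / 2)) := by
    ext y; rw [mul_pow, sq_sqrt zero_le_two]; ring_nf
  have hsmooth : ContDiff ℝ n fun y : ℝ => exp (-(y ^ 2 / 2)) := by fun_prop
  rw [hgauss, iteratedDeriv_comp_const_mul hsmooth, iteratedDeriv_eq_iterate]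
  beta_reduce
  rw [deriv_gaussian_eq_hermite_mul_gaussian, mul_pow, sq_sqrt zero_le_two]
  ring_nf

theorem two_mul_sum_one_div_sub_eq_of_hermite_roots {ι : Type*} [DecidableEq ι] {n : ℕ}
    {s : Finset ι} {w : ι → ℝ} (hws : Set.InjOn w s) (hcard : #s = n)
    (hroot : ∀ i ∈ s, aeval (w i) (hermite n) = 0) {i : ι} (hi : i ∈ s) :
    2 * ∑ j ∈ s.erase i, 1 / (w i - w j) = w i := by
  set p := (hermite n).map (Int.castRingHom ℝ)
  have hp : p = Lagrange.nodal s w := by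
    refine (hermite_monic n).map _ |>.eq_nodal hws ?_ fun j hj => ?_
    · rw [natDegree_map_eq_of_injective (RingHom.injective_int _), natDegree_hermite, hcard]
    · rw [eval_map]; exact hroot j hj
  have hode : derivative (derivative p) = C 1 * X * derivative p + C (-(n : ℝ)) * p := by
    have h := congrArg (Polynomial.map (Int.castRingHom ℝ)) (derivative_derivative_hermite n)
    simp only [Polynomial.map_sub, Polynomial.map_mul, map_X, Polynomial.map_natCast,
      ← derivative_map] at h
    rw [h, C_1, C_neg, ← map_natCast C]
    ring
  rw [hp] at hode
  simpa using Lagrange.two_mul_sum_one_div_sub_eq_of_nodal_ode hws hi 1 (-n) hode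

open Real in
theorem physHermite_eq_aeval_hermite (n : ℕ) (x : ℝ) :
    physHermite n x = √2 ^ n * aeval (√2 * x) (hermite n) := by
  have hsign : ((-1 : ℝ) ^ n) ^ 2 = 1 := by rw [← pow_mul, mul_comm, pow_mul]; simp
  have hexp : exp (x ^ 2) * exp (-x ^ 2) = 1 := by rw [← exp_add]; simp
  rw [physHermite, iteratedDeriv_exp_neg_sq_eq_hermite]
  linear_combination (√2 ^ n * aeval (√2 * x) (hermite n)) *
    (exp (x ^ 2) * exp (-x ^ 2) * hsign + hexp)

theorem sum_one_div_sub_eq_of_physHermite_eq_zero {N : ℕ} {z : Fin N → ℝ}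
    (hz : Function.Injective z) (hzero : ∀ i, physHermite N (z i) = 0) (i : Fin N) :
    ∑ j ∈ univ.erase i, 1 / (z i - z j) = z i := by
  have hsqrt : (√2 : ℝ) ≠ 0 := by positivity
  have hroot : ∀ i ∈ (univ : Finset (Fin N)), aeval (√2 * z i) (hermite N) = 0 :=
    fun i _ => by simpa [physHermite_eq_aeval_hermite, hsqrt] using hzero i
  have h := two_mul_sum_one_div_sub_eq_of_hermite_roots
    ((mul_right_injective₀ hsqrt).comp hz).injOn (card_fin N) hroot (mem_univ i)
  simp only [Function.comp_apply, sum_one_div_mul_sub_mul] at h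
  field_simp at h
  rw [Real.sq_sqrt zero_le_two] at h
  linarith

theorem solvesA_sqrt_mul {N : ℕ} {z : Fin N → ℝ}
    (hz : ∀ i, ∑ j ∈ univ.erase i, 1 / (z i - z j) = z i) {c : ℝ} (hc : c ≠ 0) :
    solvesA (fun t i => √(2 * t + c ^ 2) * z i) := by
  intro t ht i
  have hpos : 0 < 2 * t + c ^ 2 := by have := Set.mem_Ici.mp ht; positivity
  have hsqrt :
      HasDerivWithinAt (fun s => √(2 * s + c ^ 2)) (√(2 * t + c ^ 2))⁻¹ (Set.Ici 0) t := by
    refine (((hasDerivAt_id' t).const_mul 2).add_const (c ^ 2)).sqrt hpos.ne'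
      |>.hasDerivWithinAt.congr_deriv ?_
    ring
  simpa only [sum_one_div_mul_sub_mul, hz] using hsqrt.mul_const (z i)

theorem statement1 (N : ℕ) (z : Fin N → ℝ) (hz : StrictAnti z)
    (hzero : ∀ i, physHermite N (z i) = 0)
    (c : ℝ) (hc : 0 < c) :
    (∀ t ∈ Set.Ici (0:ℝ), interiorA (fun i => Real.sqrt (2*t + c^2) * z i)) ∧
    ((fun i => Real.sqrt (2*0 + c^2) * z i) = fun i => c * z i) ∧
    solvesA (fun t i => Real.sqrt (2*t + c^2) * z i) := by
  refine ⟨fun t ht => hz.const_mul ?_, ?_, solvesA_sqrt_mul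
    (sum_one_div_sub_eq_of_physHermite_eq_zero hz.injective hzero) hc.ne'⟩
  · have := Set.mem_Ici.mp ht
    positivity
  · simp [Real.sqrt_sq hc.le]
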